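/- Let k be a commutative ring, H a k-bialgebra, A a k-algebra, and κ : H×A → A, (h,a) ↦ h·a, a k-bilinear map satisfying (4.1.0) h·(ab) = (h_{(1)}·a)(h_{(2)}·b). Define m : (A⊗H)×(A⊗H) → A⊗H by m(a⊗h, b⊗g) = a(h_{(1)}·b) ⊗ h_{(2)}g, and the right A-action on A⊗H by (a⊗h)◁b = a(h_{(1)}·b) ⊗ h_{(2)}. Then the following are equivalent: (i) m is associative; (ii) m is right A-linear, i.e. m(ξ, η◁b) = m(ξ,η)◁b for all ξ,η ∈ A⊗H and b ∈ A; (iii) condition (4.1.1) h·(a(g·b)) = (h_{(1)}·a)((h_{(2)}g)·b) holds for all a,b ∈ A and h,g ∈ H. -/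

import Mathlib

open TensorProduct

/-- For `f g : H →ₗ[k] A`, the map `h ↦ Σ f(h⁽¹⁾) * g(h⁽²⁾)` (Sweedler notation). -/
noncomputable def comulLift (k A H : Type*) [CommRing k] [Ring A] [Algebra k A]
    [Ring H] [Bialgebra k H] (f g : H →ₗ[k] A) (h : H) : A :=
  TensorProduct.lift ((LinearMap.mul k A).compl₁₂ f g) (Coalgebra.comul (R := k) h)

/-- The twist map `H ⊗ A → A ⊗ H`, `h ⊗ b ↦ (h⁽¹⁾·b) ⊗ h⁽²⁾`, associated to a
measuring `κ : H → A → A`. -/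
noncomputable def smashTwist (k A H : Type*) [CommRing k] [Ring A] [Algebra k A]
    [Ring H] [Bialgebra k H] (κ : H →ₗ[k] A →ₗ[k] A) :
    H ⊗[k] A →ₗ[k] A ⊗[k] H :=
  ((TensorProduct.lift κ).rTensor H) ∘ₗ
    (TensorProduct.assoc k H A H).symm.toLinearMap ∘ₗ
    (LinearMap.lTensor H (TensorProduct.comm k H A).toLinearMap) ∘ₗ
    (TensorProduct.assoc k H H A).toLinearMap ∘ₗ
    ((Coalgebra.comul (R := k) (A := H)).rTensor A)

/-- The right `A`-action `(a ⊗ h) ◁ b = a(h⁽¹⁾·b) ⊗ h⁽²⁾` on `A ⊗ H`, as a linear map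
`(A ⊗ H) ⊗ A → A ⊗ H`. -/
noncomputable def smashAct (k A H : Type*) [CommRing k] [Ring A] [Algebra k A]
    [Ring H] [Bialgebra k H] (κ : H →ₗ[k] A →ₗ[k] A) :
    (A ⊗[k] H) ⊗[k] A →ₗ[k] A ⊗[k] H :=
  ((LinearMap.mul' k A).rTensor H) ∘ₗ
    (TensorProduct.assoc k A A H).symm.toLinearMap ∘ₗ
    (LinearMap.lTensor A (smashTwist k A H κ)) ∘ₗ
    (TensorProduct.assoc k A H A).toLinearMap

/-- The smash product multiplication `m(a ⊗ h, b ⊗ g) = a(h⁽¹⁾·b) ⊗ h⁽²⁾g` on `A ⊗ H`,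
as a linear map `(A ⊗ H) ⊗ (A ⊗ H) → A ⊗ H`. -/
noncomputable def smashMul (k A H : Type*) [CommRing k] [Ring A] [Algebra k A]
    [Ring H] [Bialgebra k H] (κ : H →ₗ[k] A →ₗ[k] A) :
    (A ⊗[k] H) ⊗[k] (A ⊗[k] H) →ₗ[k] A ⊗[k] H :=
  (LinearMap.lTensor A (LinearMap.mul' k H)) ∘ₗ
    (TensorProduct.assoc k A H H).toLinearMap ∘ₗ
    ((smashAct k A H κ).rTensor H) ∘ₗ
    (TensorProduct.assoc k (A ⊗[k] H) A H).symm.toLinearMap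

/-!
Write `m(a ⊗ h, b ⊗ g) = Σ a(h₁·b) ⊗ h₂g`. On pure tensors, `m(m(a ⊗ h, b ⊗ g), c ⊗ l)` is
`Σ a(h₁·b)(h₂g₁·c) ⊗ h₃g₂l`, while `m(a ⊗ h, m(b ⊗ g, c ⊗ l))` is `Σ a(h₁·(b(g₁·c))) ⊗ h₂g₂l`;
(4.1.1) followed by coassociativity turns the second sum into the first. Conversely, applying
`id ⊗ ε` to associativity on `(1 ⊗ h, a ⊗ g, b ⊗ 1)` gives (4.1.1). Right `A`-linearity is
associativity with third argument `b ⊗ 1`, because `ξ ◁ b = m(ξ, b ⊗ 1)`.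
-/

open Coalgebra

variable (R M C : Type*) [CommSemiring R] [AddCommMonoid M] [Module R M] [AddCommMonoid C]
  [Module R C] [Coalgebra R C] in
noncomputable def counitRight : M ⊗[R] C →ₗ[R] M :=
  TensorProduct.rid R M ∘ₗ (counit (R := R) (A := C)).lTensor M

section Coalgebra

variable {R M C : Type*} [CommSemiring R] [AddCommMonoid M] [Module R M] [AddCommMonoid C]
  [Module R C] [Coalgebra R C]

@[simp]
theorem counitRight_tmul (m : M) (c : C) :
    counitRight R M C (m ⊗ₜ c) = counit (R := R) c • m := by
  simp [counitRight]

theorem sum_counit_smul_left {c : C} {ι : Type*} (𝓡 : Repr R c ι) :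
    ∑ i ∈ 𝓡.index, counit (R := R) (𝓡.right i) • 𝓡.left i = c := by
  simpa only [map_sum, rid_tmul, one_smul] using
    congr(TensorProduct.rid R C $(sum_tmul_counit_eq 𝓡))

end Coalgebra

section SmashProduct

variable {k A H : Type*} [CommRing k] [Ring A] [Algebra k A] [Ring H] [Bialgebra k H]
  (κ : H →ₗ[k] A →ₗ[k] A) {ι : Type*}

theorem smashTwist_tmul {h : H} (𝓡 : Repr k h ι) (b : A) :
    smashTwist k A H κ (h ⊗ₜ b) = ∑ i ∈ 𝓡.index, κ (𝓡.left i) b ⊗ₜ 𝓡.right i := by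
  simp [smashTwist, ← 𝓡.eq, map_sum, sum_tmul]

theorem smashAct_tmul {h : H} (𝓡 : Repr k h ι) (a b : A) :
    smashAct k A H κ ((a ⊗ₜ h) ⊗ₜ b) = ∑ i ∈ 𝓡.index, (a * κ (𝓡.left i) b) ⊗ₜ 𝓡.right i := by
  simp [smashAct, smashTwist_tmul κ 𝓡, tmul_sum, map_sum]

theorem smashMul_tmul {h : H} (𝓡 : Repr k h ι) (a b : A) (g : H) :
    smashMul k A H κ ((a ⊗ₜ h) ⊗ₜ (b ⊗ₜ g)) =
      ∑ i ∈ 𝓡.index, (a * κ (𝓡.left i) b) ⊗ₜ (𝓡.right i * g) := by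
  simp [smashMul, smashAct_tmul κ 𝓡, sum_tmul, map_sum]

theorem smashAct_eq_smashMul (ξ : A ⊗[k] H) (b : A) :
    smashAct k A H κ (ξ ⊗ₜ b) = smashMul k A H κ (ξ ⊗ₜ (b ⊗ₜ 1)) := by
  induction ξ using TensorProduct.induction_on with
  | zero => simp
  | tmul a h => simp [smashAct_tmul κ (Repr.arbitrary k h), smashMul_tmul κ (Repr.arbitrary k h)]
  | add ξ ξ' hξ hξ' => simp only [add_tmul, map_add, hξ, hξ']

theorem comulLift_eq_sum (f g : H →ₗ[k] A) {h : H} (𝓡 : Repr k h ι) :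
    comulLift k A H f g h = ∑ i ∈ 𝓡.index, f (𝓡.left i) * g (𝓡.right i) := by
  simp [comulLift, ← 𝓡.eq, map_sum]

theorem counitRight_smashMul_tmul (a b : A) (h g : H) :
    counitRight k A H (smashMul k A H κ ((a ⊗ₜ h) ⊗ₜ (b ⊗ₜ g))) =
      counit (R := k) g • (a * κ h b) := by
  let 𝓡 := Repr.arbitrary k h
  calc counitRight k A H (smashMul k A H κ ((a ⊗ₜ h) ⊗ₜ (b ⊗ₜ g)))
      = counit (R := k) g • (LinearMap.mulLeft k a ∘ₗ κ.flip b)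
          (∑ i ∈ 𝓡.index, counit (R := k) (𝓡.right i) • 𝓡.left i) := by
        simp [smashMul_tmul κ 𝓡, map_sum, Finset.smul_sum, mul_comm, mul_smul]
    _ = counit (R := k) g • (a * κ h b) := by rw [sum_counit_smul_left]; rfl

theorem counitRight_smashMul (a : A) (h : H) (η : A ⊗[k] H) :
    counitRight k A H (smashMul k A H κ ((a ⊗ₜ h) ⊗ₜ η)) = a * κ h (counitRight k A H η) := by
  induction η using TensorProduct.induction_on with
  | zero => simp
  | tmul b g => simp [counitRight_smashMul_tmul]
  | add η η' hη hη' => simp only [tmul_add, map_add, hη, hη', mul_add]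

/-- Condition (4.1.1): `h·(a(g·b)) = (h₁·a)((h₂g)·b)`. -/
def IsSmashCompatible : Prop :=
  ∀ (h g : H) (a b : A),
    κ h (a * κ g b) = comulLift k A H (κ.flip a) ((κ.flip b) ∘ₗ LinearMap.mulRight k g) h

theorem isSmashCompatible_of_assoc_tmul (a b : A) (h g : H)
    (hassoc : smashMul k A H κ (smashMul k A H κ ((1 ⊗ₜ h) ⊗ₜ (a ⊗ₜ g)) ⊗ₜ (b ⊗ₜ 1)) =
      smashMul k A H κ ((1 ⊗ₜ h) ⊗ₜ smashMul k A H κ ((a ⊗ₜ g) ⊗ₜ (b ⊗ₜ 1)))) :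
    κ h (a * κ g b) = comulLift k A H (κ.flip a) ((κ.flip b) ∘ₗ LinearMap.mulRight k g) h := by
  let 𝓡 := Repr.arbitrary k h
  have := congr(counitRight k A H $hassoc)
  rw [smashMul_tmul κ 𝓡, sum_tmul, map_sum, map_sum, counitRight_smashMul,
    counitRight_smashMul_tmul] at this
  simpa [counitRight_smashMul_tmul, comulLift_eq_sum _ _ 𝓡] using this.symm

theorem IsSmashCompatible.sum_tmul_eq (hκ : IsSmashCompatible κ) {h : H} (𝓡 : Repr k h ι)
    {ι' : ι → Type*} (𝓢 : (i : ι) → Repr k (𝓡.right i) (ι' i)) (a b c : A) (x y : H) :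
    ∑ i ∈ 𝓡.index, ∑ j ∈ (𝓢 i).index,
        (a * κ (𝓡.left i) b * κ ((𝓢 i).left j * x) c) ⊗ₜ[k] ((𝓢 i).right j * y) =
      ∑ i ∈ 𝓡.index, (a * κ (𝓡.left i) (b * κ x c)) ⊗ₜ[k] (𝓡.right i * y) := by
  let 𝓤 := fun i ↦ Repr.arbitrary k (𝓡.left i)
  have hcoassoc := congr(((LinearMap.mul' k A).rTensor H ∘ₗ
      (TensorProduct.assoc k A A H).symm.toLinearMap ∘ₗ
      TensorProduct.map (LinearMap.mulLeft k a ∘ₗ κ.flip b)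
        (TensorProduct.map (κ.flip c ∘ₗ LinearMap.mulRight k x) (LinearMap.mulRight k y)))
    $(sum_tmul_tmul_eq 𝓡 𝓤 𝓢))
  simp only [map_sum, LinearMap.comp_apply, TensorProduct.map_tmul, LinearEquiv.coe_coe,
    TensorProduct.assoc_symm_tmul, LinearMap.rTensor_tmul, LinearMap.mul'_apply,
    LinearMap.mulLeft_apply, LinearMap.mulRight_apply, LinearMap.flip_apply] at hcoassoc
  simp_rw [hκ _ x, comulLift_eq_sum _ _ (𝓤 _), Finset.mul_sum, sum_tmul, ← hcoassoc]
  simp [mul_assoc]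

theorem smashMul_assoc_tmul (hκ : IsSmashCompatible κ) (a b c : A) (h g l : H) :
    smashMul k A H κ (smashMul k A H κ ((a ⊗ₜ h) ⊗ₜ (b ⊗ₜ g)) ⊗ₜ (c ⊗ₜ l)) =
      smashMul k A H κ ((a ⊗ₜ h) ⊗ₜ smashMul k A H κ ((b ⊗ₜ g) ⊗ₜ (c ⊗ₜ l))) := by
  let 𝓡 := Repr.arbitrary k h
  let 𝓢 := fun i ↦ Repr.arbitrary k (𝓡.right i)
  let 𝓣 := Repr.arbitrary k g
  calc _ = ∑ m ∈ 𝓣.index, ∑ i ∈ 𝓡.index, ∑ j ∈ (𝓢 i).index,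
          (a * κ (𝓡.left i) b * κ ((𝓢 i).left j * 𝓣.left m) c) ⊗ₜ[k]
            ((𝓢 i).right j * (𝓣.right m * l)) := by
        simp only [smashMul_tmul κ 𝓡, sum_tmul, map_sum,
          fun i ↦ smashMul_tmul κ ((𝓢 i).mul 𝓣), Finset.sum_product, Repr.mul_left,
          Repr.mul_right, Repr.mul_index]
        rw [Finset.sum_comm]
        refine Finset.sum_congr rfl fun i _ ↦ ?_
        rw [Finset.sum_comm]
        simp only [mul_assoc]
    _ = _ := by
        simp only [hκ.sum_tmul_eq, smashMul_tmul κ 𝓣, tmul_sum, map_sum, smashMul_tmul κ 𝓡]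

theorem smashMul_assoc (hκ : IsSmashCompatible κ) (ξ η ζ : A ⊗[k] H) :
    smashMul k A H κ (smashMul k A H κ (ξ ⊗ₜ η) ⊗ₜ ζ) =
      smashMul k A H κ (ξ ⊗ₜ smashMul k A H κ (η ⊗ₜ ζ)) := by
  induction ξ using TensorProduct.induction_on with
  | zero => simp
  | add ξ ξ' hξ hξ' => simp only [add_tmul, map_add, hξ, hξ']
  | tmul a h =>
    induction η using TensorProduct.induction_on with
    | zero => simp
    | add η η' hη hη' => simp only [add_tmul, tmul_add, map_add, hη, hη']
    | tmul b g =>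
      induction ζ using TensorProduct.induction_on with
      | zero => simp
      | add ζ ζ' hζ hζ' => simp only [tmul_add, map_add, hζ, hζ']
      | tmul c l => exact smashMul_assoc_tmul κ hκ a b c h g l

theorem smashMul_assoc_iff :
    (∀ ξ η ζ : A ⊗[k] H, smashMul k A H κ (smashMul k A H κ (ξ ⊗ₜ η) ⊗ₜ ζ) =
      smashMul k A H κ (ξ ⊗ₜ smashMul k A H κ (η ⊗ₜ ζ))) ↔ IsSmashCompatible κ :=
  ⟨fun hassoc _ _ a b ↦ isSmashCompatible_of_assoc_tmul κ a b _ _ (hassoc _ _ _),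
    smashMul_assoc κ⟩

theorem smashMul_smashAct_iff :
    (∀ (ξ η : A ⊗[k] H) (b : A), smashMul k A H κ (ξ ⊗ₜ smashAct k A H κ (η ⊗ₜ b)) =
      smashAct k A H κ (smashMul k A H κ (ξ ⊗ₜ η) ⊗ₜ b)) ↔ IsSmashCompatible κ := by
  simp only [smashAct_eq_smashMul]
  exact ⟨fun hlin _ _ a b ↦ isSmashCompatible_of_assoc_tmul κ a b _ _ (hlin _ _ _).symm,
    fun hκ _ _ _ ↦ (smashMul_assoc κ hκ _ _ _).symm⟩

end SmashProduct

theorem smash_assoc_iff_general (k A H : Type*) [CommRing k] [Ring A] [Algebra k A]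
    [Ring H] [Bialgebra k H] (κ : H →ₗ[k] A →ₗ[k] A) :
    ((∀ ξ η ζ : A ⊗[k] H,
        smashMul k A H κ (smashMul k A H κ (ξ ⊗ₜ[k] η) ⊗ₜ[k] ζ) =
          smashMul k A H κ (ξ ⊗ₜ[k] smashMul k A H κ (η ⊗ₜ[k] ζ))) ↔
      (∀ (h g : H) (a b : A),
        κ h (a * κ g b) =
          comulLift k A H (κ.flip a) ((κ.flip b) ∘ₗ LinearMap.mulRight k g) h)) ∧
    ((∀ (ξ η : A ⊗[k] H) (b : A),
        smashMul k A H κ (ξ ⊗ₜ[k] smashAct k A H κ (η ⊗ₜ[k] b)) =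
          smashAct k A H κ (smashMul k A H κ (ξ ⊗ₜ[k] η) ⊗ₜ[k] b)) ↔
      (∀ (h g : H) (a b : A),
        κ h (a * κ g b) =
          comulLift k A H (κ.flip a) ((κ.flip b) ∘ₗ LinearMap.mulRight k g) h)) :=
  ⟨smashMul_assoc_iff κ, smashMul_smashAct_iff κ⟩

/-- for `κ` satisfying (4.1.0), the following are equivalent:
(i) the smash multiplication `m` is associative; (ii) `m` is right `A`-linear for the
action `(a ⊗ h) ◁ b = a(h⁽¹⁾·b) ⊗ h⁽²⁾`; (iii) condition (4.1.1)
`h·(a(g·b)) = (h⁽¹⁾·a)((h⁽²⁾g)·b)` holds. -/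
theorem smash_assoc_iff (k A H : Type*) [CommRing k] [Ring A] [Algebra k A]
    [Ring H] [Bialgebra k H] (κ : H →ₗ[k] A →ₗ[k] A)
    (h410 : ∀ (h : H) (a b : A), κ h (a * b) = comulLift k A H (κ.flip a) (κ.flip b) h) :
    ((∀ ξ η ζ : A ⊗[k] H,
        smashMul k A H κ (smashMul k A H κ (ξ ⊗ₜ[k] η) ⊗ₜ[k] ζ) =
          smashMul k A H κ (ξ ⊗ₜ[k] smashMul k A H κ (η ⊗ₜ[k] ζ))) ↔
      (∀ (h g : H) (a b : A),
        κ h (a * κ g b) =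
          comulLift k A H (κ.flip a) ((κ.flip b) ∘ₗ LinearMap.mulRight k g) h)) ∧
    ((∀ (ξ η : A ⊗[k] H) (b : A),
        smashMul k A H κ (ξ ⊗ₜ[k] smashAct k A H κ (η ⊗ₜ[k] b)) =
          smashAct k A H κ (smashMul k A H κ (ξ ⊗ₜ[k] η) ⊗ₜ[k] b)) ↔
      (∀ (h g : H) (a b : A),
        κ h (a * κ g b) =
          comulLift k A H (κ.flip a) ((κ.flip b) ∘ₗ LinearMap.mulRight k g) h)) :=
  smash_assoc_iff_general k A H κ
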